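/- (Holevo–Helstrom, achievability.) For any two density matrices ρ and σ on ℂ^d there exists an orthogonal projection Π (a Hermitian matrix with Π² = Π) such that Tr(Π(ρ−σ)) = TD(ρ,σ); consequently the two-outcome measurement {Π, I−Π} distinguishes ρ from σ, given each with probability 1/2, with success probability exactly (1/2)(1 + TD(ρ,σ)). This measurement is called the Helstrom measurement. -/

import Mathlib

open Matrix ComplexOrder

/-- The trace norm of a matrix: `‖X‖₁ = Tr √(Xᴴ X)`. -/
noncomputable def traceNorm {d : ℕ} (X : Matrix (Fin d) (Fin d) ℂ) : ℝ :=
  (((Matrix.posSemidef_conjTranspose_mul_self X).1.eigenvectorUnitary.1 *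
      diagonal (((↑) : ℝ → ℂ) ∘ (√·) ∘ (Matrix.posSemidef_conjTranspose_mul_self X).1.eigenvalues) *
      (star (Matrix.posSemidef_conjTranspose_mul_self X).1.eigenvectorUnitary :
        Matrix (Fin d) (Fin d) ℂ)).trace).re

/-- The trace distance between two matrices: `TD(ρ,σ) = ‖ρ − σ‖₁ / 2`. -/
noncomputable def traceDist {d : ℕ} (ρ σ : Matrix (Fin d) (Fin d) ℂ) : ℝ :=
  traceNorm (ρ - σ) / 2

/-- A density matrix: positive semidefinite with trace 1. -/
def IsDensityMatrix {d : ℕ} (ρ : Matrix (Fin d) (Fin d) ℂ) : Prop :=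
  ρ.PosSemidef ∧ ρ.trace = 1

/-!
Diagonalize the Hermitian matrix `Δ = ρ - σ` with eigenvalues `λᵢ` and let `Π` project onto the
span of its eigenvectors with `λᵢ ≥ 0`. Then `Tr(ΠΔ) = ∑ λᵢ⁺ = (∑ |λᵢ| + ∑ λᵢ) / 2`. Since
`√(ΔᴴΔ) = |Δ|`, the first sum is `‖Δ‖₁`, and the second is `Tr Δ = 0`. The success probability
is `(Tr(Πρ) + 1 - Tr(Πσ)) / 2 = (1 + Tr(ΠΔ)) / 2`.
-/

namespace Matrix

variable {n 𝕜 : Type*} [Fintype n] [DecidableEq n] [RCLike 𝕜]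

lemma IsHermitian.trace_cfc {A : Matrix n n 𝕜} (hA : A.IsHermitian) (f : ℝ → ℝ) :
    (cfc f A).trace = ∑ i, (f (hA.eigenvalues i) : 𝕜) := by
  rw [hA.cfc_eq, IsHermitian.cfc, Unitary.conjStarAlgAut_apply, trace_mul_cycle,
    Unitary.coe_star_mul_self, one_mul, trace_diagonal]
  rfl

lemma IsHermitian.cfc_sqrt_conjTranspose_mul_self {A : Matrix n n 𝕜} (hA : A.IsHermitian) :
    cfc Real.sqrt (Aᴴ * A) = cfc (abs : ℝ → ℝ) A := by
  have hsq : Aᴴ * A = cfc (fun x : ℝ => x * x) A := by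
    rw [cfc_mul (fun x : ℝ => x) (fun x : ℝ => x) A, cfc_id' ℝ A, hA.eq]
  rw [hsq, ← cfc_comp' Real.sqrt (fun x : ℝ => x * x) A]
  simp only [Real.sqrt_mul_self_eq_abs]

noncomputable def helstromProjection (A : Matrix n n 𝕜) : Matrix n n 𝕜 :=
  cfc (fun x : ℝ => if 0 ≤ x then 1 else 0) A

lemma isHermitian_helstromProjection (A : Matrix n n 𝕜) : (helstromProjection A).IsHermitian :=
  cfc_predicate _ A

lemma helstromProjection_mul_self (A : Matrix n n 𝕜) :
    helstromProjection A * helstromProjection A = helstromProjection A := by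
  rw [helstromProjection, ← cfc_mul _ _ A (finite_real_spectrum.continuousOn _)
    (finite_real_spectrum.continuousOn _)]
  congr with x
  split_ifs <;> simp

lemma IsHermitian.trace_helstromProjection_mul {A : Matrix n n 𝕜} (hA : A.IsHermitian) :
    (helstromProjection A * A).trace = ∑ i, (((hA.eigenvalues i)⁺ : ℝ) : 𝕜) := by
  have hprod : helstromProjection A * A = cfc (fun x : ℝ => x⁺) A := by
    nth_rw 2 [← cfc_id' ℝ A]
    rw [helstromProjection, ← cfc_mul _ _ A (finite_real_spectrum.continuousOn _)]
    congr with x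
    split_ifs with hx
    · simp [posPart_eq_self.mpr hx]
    · simp [posPart_eq_zero.mpr (not_le.mp hx).le]
  rw [hprod, hA.trace_cfc]

end Matrix

lemma traceNorm_eq_re_trace_cfc_sqrt {d : ℕ} (X : Matrix (Fin d) (Fin d) ℂ) :
    traceNorm X = (cfc Real.sqrt (Xᴴ * X)).trace.re := by
  rw [(posSemidef_conjTranspose_mul_self X).1.cfc_eq]
  rfl

lemma Matrix.IsHermitian.traceNorm_eq_sum_abs_eigenvalues {d : ℕ}
    {A : Matrix (Fin d) (Fin d) ℂ} (hA : A.IsHermitian) :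
    traceNorm A = ∑ i, |hA.eigenvalues i| := by
  rw [traceNorm_eq_re_trace_cfc_sqrt, hA.cfc_sqrt_conjTranspose_mul_self, hA.trace_cfc]
  simp

lemma Matrix.IsHermitian.re_trace_helstromProjection_mul {d : ℕ}
    {A : Matrix (Fin d) (Fin d) ℂ} (hA : A.IsHermitian) :
    (helstromProjection A * A).trace.re = (traceNorm A + A.trace.re) / 2 := by
  rw [hA.trace_helstromProjection_mul, hA.traceNorm_eq_sum_abs_eigenvalues,
    hA.trace_eq_sum_eigenvalues]
  simp only [Complex.re_sum, Complex.coe_algebraMap, Complex.ofReal_re, ← Finset.sum_add_distrib,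
    Finset.sum_div]
  refine Finset.sum_congr rfl fun i _ => ?_
  linarith [posPart_add_negPart (hA.eigenvalues i), posPart_sub_negPart (hA.eigenvalues i)]

/-- Holevo–Helstrom (achievability): there is an orthogonal projection `P`
(a Hermitian matrix with `P² = P`) with `Tr(P(ρ−σ)) = TD(ρ,σ)`; consequently the two-outcome
measurement `{P, I−P}` distinguishes `ρ` from `σ` (given each with probability 1/2)
with success probability exactly `(1/2)(1 + TD(ρ,σ))`. -/
theorem holevo_helstrom_achievability {d : ℕ} {ρ σ : Matrix (Fin d) (Fin d) ℂ}
    (hρ : IsDensityMatrix ρ) (hσ : IsDensityMatrix σ) :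
    ∃ P : Matrix (Fin d) (Fin d) ℂ, P.IsHermitian ∧ P * P = P ∧
      ((P * (ρ - σ)).trace).re = traceDist ρ σ ∧
      (1 / 2) * ((P * ρ).trace).re
          + (1 / 2) * ((((1 : Matrix (Fin d) (Fin d) ℂ) - P) * σ).trace).re
        = (1 / 2) * (1 + traceDist ρ σ) := by
  have hΔ : (ρ - σ).IsHermitian := hρ.1.1.sub hσ.1.1
  have htrace : (ρ - σ).trace = 0 := by rw [trace_sub, hρ.2, hσ.2, sub_self]
  set P := helstromProjection (ρ - σ)
  have hP : (P * (ρ - σ)).trace.re = traceDist ρ σ := by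
    rw [hΔ.re_trace_helstromProjection_mul, htrace, traceDist, Complex.zero_re, add_zero]
  refine ⟨P, isHermitian_helstromProjection _, helstromProjection_mul_self _, hP, ?_⟩
  have hcompl : ((1 - P) * σ).trace.re = 1 - (P * σ).trace.re := by
    rw [sub_mul, one_mul, trace_sub, hσ.2, Complex.sub_re, Complex.one_re]
  rw [mul_sub, trace_sub, Complex.sub_re] at hP
  linarith
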